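/- arXiv:1907.13099 — 3 statements merged into one kernel-verified Lean document; each statement's English description precedes it below -/
import Mathlib

section
/- For all real numbers y, ȳ, (|y|^(4/3) - |ȳ|^(4/3))^2 ≤ 4 * |y - ȳ|^2 * (|y|^(2/3) + |ȳ|^(2/3)). -/
lemma aux_poly (u v : ℝ) (hu : 0 ≤ u) (hv : 0 ≤ v) :
    (u^4 - v^4)^2 ≤ 4 * (u^3 - v^3)^2 * (u^2 + v^2) := by
  nlinarith [sq_nonneg (u - v), sq_nonneg (u + v), sq_nonneg (u*v), mul_nonneg hu hv,
    sq_nonneg (u^2 - v^2), sq_nonneg (u^2 + v^2), sq_nonneg (u^2 - u*v), sq_nonneg (v^2 - u*v),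
    mul_nonneg (mul_nonneg hu hv) (sq_nonneg (u - v)),
    mul_nonneg (mul_nonneg (mul_nonneg hu hv) (mul_nonneg hu hv)) (sq_nonneg (u - v)),
    mul_nonneg (mul_nonneg (mul_nonneg (mul_nonneg hu hv) hu) hv) (sq_nonneg (u - v)),
    mul_nonneg (mul_nonneg (mul_nonneg (mul_nonneg (mul_nonneg (mul_nonneg hu hv) hu) hv) hu) hv) (sq_nonneg (u - v))]

theorem stmt_4 (y ybar : ℝ) :
    (|y| ^ ((4 : ℝ) / 3) - |ybar| ^ ((4 : ℝ) / 3)) ^ 2 ≤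
      4 * |y - ybar| ^ 2 * (|y| ^ ((2 : ℝ) / 3) + |ybar| ^ ((2 : ℝ) / 3)) := by
  set u := |y| ^ ((1 : ℝ) / 3) with hu_def
  set v := |ybar| ^ ((1 : ℝ) / 3) with hv_def
  have hu : 0 ≤ u := Real.rpow_nonneg (abs_nonneg y) _
  have hv : 0 ≤ v := Real.rpow_nonneg (abs_nonneg ybar) _
  have hy4 : |y| ^ ((4 : ℝ) / 3) = u ^ 4 := by
    rw [hu_def, ← Real.rpow_natCast (|y| ^ ((1:ℝ)/3)) 4, ← Real.rpow_mul (abs_nonneg y)]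
    norm_num
  have hy2 : |y| ^ ((2 : ℝ) / 3) = u ^ 2 := by
    rw [hu_def, ← Real.rpow_natCast (|y| ^ ((1:ℝ)/3)) 2, ← Real.rpow_mul (abs_nonneg y)]
    norm_num
  have hy3 : u ^ 3 = |y| := by
    rw [hu_def, ← Real.rpow_natCast (|y| ^ ((1:ℝ)/3)) 3, ← Real.rpow_mul (abs_nonneg y)]
    norm_num
  have hb4 : |ybar| ^ ((4 : ℝ) / 3) = v ^ 4 := by
    rw [hv_def, ← Real.rpow_natCast (|ybar| ^ ((1:ℝ)/3)) 4, ← Real.rpow_mul (abs_nonneg ybar)]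
    norm_num
  have hb2 : |ybar| ^ ((2 : ℝ) / 3) = v ^ 2 := by
    rw [hv_def, ← Real.rpow_natCast (|ybar| ^ ((1:ℝ)/3)) 2, ← Real.rpow_mul (abs_nonneg ybar)]
    norm_num
  have hb3 : v ^ 3 = |ybar| := by
    rw [hv_def, ← Real.rpow_natCast (|ybar| ^ ((1:ℝ)/3)) 3, ← Real.rpow_mul (abs_nonneg ybar)]
    norm_num
  rw [hy4, hy2, hb4, hb2]
  have hd : |u ^ 3 - v ^ 3| ≤ |y - ybar| := by
    rw [hy3, hb3]; exact abs_abs_sub_abs_le_abs_sub y ybar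
  have hd2 : (u ^ 3 - v ^ 3) ^ 2 ≤ |y - ybar| ^ 2 := by
    rw [← sq_abs (u ^ 3 - v ^ 3)]
    exact pow_le_pow_left₀ (abs_nonneg _) hd 2
  calc (u ^ 4 - v ^ 4) ^ 2 ≤ 4 * (u ^ 3 - v ^ 3) ^ 2 * (u ^ 2 + v ^ 2) :=
        aux_poly u v hu hv
    _ ≤ 4 * |y - ybar| ^ 2 * (u ^ 2 + v ^ 2) := by
        apply mul_le_mul_of_nonneg_right _ (by positivity)
        linarith
end

section
/- Let f, g satisfy the Khasminskii-type condition: there exist p > 2 and K₁ > 0 with xᵀf(x,y) + ((p−1)/2)|g(x,y)|² ≤ K₁(1+|x|²+|y|²) for all x, y ∈ ℝⁿ. Let π_Δ be the radial truncation onto the ball of radius R = μ⁻¹(h(Δ)) ≥ μ⁻¹(h(1)) > 0 and set f_Δ(x,y)=f(π_Δ(x),π_Δ(y)), g_Δ(x,y)=g(π_Δ(x),π_Δ(y)). Then for all x, y ∈ ℝⁿ, xᵀf_Δ(x,y) + ((p−1)/2)|g_Δ(x,y)|² ≤ K̂(1+|x|²+|y|²), where K̂ = 2K₁(1 ∨ 1/μ⁻¹(h(1))).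 -/
set_option maxHeartbeats 1000000


theorem stmt_9 (n m : ℕ)
    (f : EuclideanSpace ℝ (Fin n) × EuclideanSpace ℝ (Fin n) → EuclideanSpace ℝ (Fin n))
    (g : EuclideanSpace ℝ (Fin n) × EuclideanSpace ℝ (Fin n) → EuclideanSpace ℝ (Fin n × Fin m))
    (p K₁ : ℝ) (hp : 2 < p) (hK₁ : 0 < K₁)
    (hKhas : ∀ x y : EuclideanSpace ℝ (Fin n),
      inner ℝ x (f (x, y)) + (p - 1) / 2 * ‖g (x, y)‖ ^ 2 ≤
        K₁ * (1 + ‖x‖ ^ 2 + ‖y‖ ^ 2))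
    (μ : ℝ → ℝ) (hμmono : StrictMonoOn μ (Set.Ici 0))
    (hμcont : ContinuousOn μ (Set.Ici 0))
    (hμtop : Filter.Tendsto μ Filter.atTop Filter.atTop)
    (h : ℝ → ℝ) (hhmono : StrictAntiOn h (Set.Ioc 0 1))
    (Δ : ℝ) (hΔ : Δ ∈ Set.Ioc (0 : ℝ) 1)
    (R R₁ : ℝ) (hR₁pos : 0 < R₁) (hRR₁ : R₁ ≤ R)
    (hRinv : μ R = h Δ) (hR₁inv : μ R₁ = h 1)
    (π : EuclideanSpace ℝ (Fin n) → EuclideanSpace ℝ (Fin n))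
    (hπ : ∀ x, π x = (min ‖x‖ R) • (‖x‖⁻¹ • x))
    (fΔ : EuclideanSpace ℝ (Fin n) × EuclideanSpace ℝ (Fin n) → EuclideanSpace ℝ (Fin n))
    (gΔ : EuclideanSpace ℝ (Fin n) × EuclideanSpace ℝ (Fin n) → EuclideanSpace ℝ (Fin n × Fin m))
    (hfΔ : ∀ x y, fΔ (x, y) = f (π x, π y)) (hgΔ : ∀ x y, gΔ (x, y) = g (π x, π y)) :
    ∀ x y : EuclideanSpace ℝ (Fin n),
      inner ℝ x (fΔ (x, y)) + (p - 1) / 2 * ‖gΔ (x, y)‖ ^ 2 ≤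
        2 * K₁ * max 1 (1 / R₁) * (1 + ‖x‖ ^ 2 + ‖y‖ ^ 2) := by
  intro x y
  have hR : 0 < R := lt_of_lt_of_le hR₁pos hRR₁
  set M : ℝ := max 1 (1 / R₁) with hM
  have hM1 : (1:ℝ) ≤ M := le_max_left _ _
  have hMR₁ : 1 ≤ M * R₁ := by
    have : (1 / R₁) * R₁ ≤ M * R₁ :=
      mul_le_mul_of_nonneg_right (le_max_right _ _) hR₁pos.le
    calc (1:ℝ) = (1 / R₁) * R₁ := by field_simp
    _ ≤ M * R₁ := this
  have hMR : 1 ≤ M * R :=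
    le_trans hMR₁ (mul_le_mul_of_nonneg_left hRR₁ (le_trans zero_le_one hM1))
  have hπle : ∀ z : EuclideanSpace ℝ (Fin n), ‖π z‖ ≤ ‖z‖ ∧ ‖π z‖ ≤ R := by
    intro z
    by_cases hz : z = 0
    · simp [hπ, hz, hR.le]
    · have hzn : ‖z‖ ≠ 0 := norm_ne_zero_iff.mpr hz
      have : ‖π z‖ = min ‖z‖ R := by
        rw [hπ, norm_smul, norm_smul, norm_inv, norm_norm,
          inv_mul_cancel₀ hzn, mul_one, Real.norm_eq_abs,
          abs_of_nonneg (le_min (norm_nonneg z) hR.le)]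
      rw [this]
      exact ⟨min_le_left _ _, min_le_right _ _⟩
  have hvy : ‖π y‖ ≤ ‖y‖ := (hπle y).1
  have hvR : ‖π y‖ ≤ R := (hπle y).2
  rw [hfΔ, hgΔ]
  by_cases hxR : ‖x‖ ≤ R
  · have hπx : π x = x := by
      by_cases hx0 : x = 0
      · simp [hπ, hx0]
      · rw [hπ, min_eq_left hxR, smul_smul,
          mul_inv_cancel₀ (norm_ne_zero_iff.mpr hx0), one_smul]
    rw [hπx]
    have hkey := hKhas x (π y)
    have hv2 : ‖π y‖ ^ 2 ≤ ‖y‖ ^ 2 := pow_le_pow_left₀ (norm_nonneg _) hvy 2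
    have hfac : (0:ℝ) ≤ 1 + ‖x‖ ^ 2 + ‖y‖ ^ 2 := by positivity
    have hK2 : K₁ ≤ 2 * K₁ * M := by nlinarith
    have h1 : K₁ * (1 + ‖x‖ ^ 2 + ‖π y‖ ^ 2) ≤ K₁ * (1 + ‖x‖ ^ 2 + ‖y‖ ^ 2) := by
      nlinarith
    have h2 : K₁ * (1 + ‖x‖ ^ 2 + ‖y‖ ^ 2) ≤ 2 * K₁ * M * (1 + ‖x‖ ^ 2 + ‖y‖ ^ 2) :=
      mul_le_mul_of_nonneg_right hK2 hfac
    linarith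
  · push_neg at hxR
    have hx0 : x ≠ 0 := by
      intro hx0; rw [hx0] at hxR; simp at hxR; linarith
    have hxn : ‖x‖ ≠ 0 := norm_ne_zero_iff.mpr hx0
    have hxpos : 0 < ‖x‖ := lt_trans hR hxR
    have hπx : π x = (R / ‖x‖) • x := by
      rw [hπ, min_eq_right hxR.le, smul_smul, div_eq_mul_inv]
    have hx_eq : x = (‖x‖ / R) • π x := by
      rw [hπx, smul_smul]
      have : ‖x‖ / R * (R / ‖x‖) = 1 := by field_simp
      rw [this, one_smul]
    have hnormπx : ‖π x‖ = R := by
      rw [hπx, norm_smul, Real.norm_eq_abs,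
        abs_of_nonneg (div_nonneg hR.le (norm_nonneg x)), div_mul_cancel₀ _ hxn]
    have hinner0 : ∀ w : EuclideanSpace ℝ (Fin n),
        (inner ℝ x w : ℝ) = (‖x‖ / R) * inner ℝ (π x) w := by
      intro w
      conv_lhs => rw [hx_eq]
      exact real_inner_smul_left _ _ _
    have hinner := hinner0 (f (π x, π y))
    have hc1 : (1:ℝ) ≤ ‖x‖ / R := (one_le_div hR).mpr hxR.le
    have hkey := hKhas (π x) (π y)
    rw [hnormπx] at hkey
    have hG : 0 ≤ (p - 1) / 2 * ‖g (π x, π y)‖ ^ 2 :=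
      mul_nonneg (by linarith) (sq_nonneg _)
    have hstep : (inner ℝ x (f (π x, π y)) : ℝ) + (p - 1) / 2 * ‖g (π x, π y)‖ ^ 2
        ≤ (‖x‖ / R) * (K₁ * (1 + R ^ 2 + ‖π y‖ ^ 2)) := by
      rw [hinner]
      have h2 : (‖x‖ / R) * ((inner ℝ (π x) (f (π x, π y)) : ℝ)
          + (p - 1) / 2 * ‖g (π x, π y)‖ ^ 2)
          ≤ (‖x‖ / R) * (K₁ * (1 + R ^ 2 + ‖π y‖ ^ 2)) :=
        mul_le_mul_of_nonneg_left hkey (le_trans zero_le_one hc1)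
      nlinarith [hG, hc1]
    refine le_trans hstep ?_
    rw [div_mul_eq_mul_div, div_le_iff₀ hR]
    have hv0 : 0 ≤ ‖π y‖ := norm_nonneg _
    have hMnn : (0:ℝ) ≤ M := le_trans zero_le_one hM1
    have A : 2 * ‖x‖ ≤ M * R + M * R * ‖x‖ ^ 2 := by
      nlinarith [sq_nonneg (‖x‖ - 1),
        mul_nonneg (sub_nonneg.mpr hMR) (add_nonneg zero_le_one (sq_nonneg ‖x‖))]
    have B : ‖x‖ * R ^ 2 ≤ M * R * ‖x‖ ^ 2 := by
      nlinarith [mul_nonneg (mul_nonneg (sub_nonneg.mpr hxR.le) hR.le) hxpos.le,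
        mul_nonneg (mul_nonneg (sub_nonneg.mpr hM1) hR.le) (sq_nonneg ‖x‖)]
    have C : 2 * (‖x‖ * ‖π y‖ ^ 2) ≤ M * R * ‖x‖ ^ 2 + M * R * ‖y‖ ^ 2 := by
      have c0 : ‖π y‖ ^ 2 ≤ R * ‖y‖ := by
        have := mul_le_mul hvR hvy hv0 hR.le
        nlinarith
      have c1 : ‖x‖ * ‖π y‖ ^ 2 ≤ ‖x‖ * (R * ‖y‖) :=
        mul_le_mul_of_nonneg_left c0 hxpos.le
      have c3 : 2 * (‖x‖ * (R * ‖y‖)) ≤ R * ‖x‖ ^ 2 + R * ‖y‖ ^ 2 := by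
        nlinarith [mul_nonneg hR.le (sq_nonneg (‖x‖ - ‖y‖))]
      have c4 : R * ‖x‖ ^ 2 ≤ M * R * ‖x‖ ^ 2 := by
        nlinarith [mul_nonneg (mul_nonneg (sub_nonneg.mpr hM1) hR.le) (sq_nonneg ‖x‖)]
      have c5 : R * ‖y‖ ^ 2 ≤ M * R * ‖y‖ ^ 2 := by
        nlinarith [mul_nonneg (mul_nonneg (sub_nonneg.mpr hM1) hR.le) (sq_nonneg ‖y‖)]
      linarith
    have main : ‖x‖ * (1 + R ^ 2 + ‖π y‖ ^ 2) ≤ 2 * M * R * (1 + ‖x‖ ^ 2 + ‖y‖ ^ 2) := by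
      nlinarith [A, B, C, hMR, mul_nonneg (mul_nonneg hMnn hR.le) (sq_nonneg ‖y‖),
        mul_nonneg (mul_nonneg hMnn hR.le) (sq_nonneg ‖x‖)]
    nlinarith [mul_le_mul_of_nonneg_left main hK₁.le]
end

section
/- Let p > 2 and a₁ = sup_{u≥0}(−u⁴ + p u³), a₂ = 2a₁ ∨ p. Then for the coefficients f(x,y) = (|y₂|^{4/3} − x₁³, |y₁|^{4/3} − x₂³) and g(x,y) = (|x₁|^{3/2} + y₂, |x₂|^{3/2} + y₁) on ℝ², one has xᵀf(x,y) + ((p−1)/2)|g(x,y)|² ≤ a₂(1 + |x|² + |y|²) for all x, y ∈ ℝ². -/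
private lemma aux12 (p a₁ : ℝ) (hp : 2 < p)
    (key : ∀ u : ℝ, 0 ≤ u → -u ^ 4 + p * u ^ 3 ≤ a₁) (x y : ℝ) :
    x * (|y| ^ ((4 : ℝ) / 3) - x ^ 3) + (p - 1) / 2 * (|x| ^ ((3 : ℝ) / 2) + y) ^ 2 ≤
      a₁ + (p - 1 / 3) * y ^ 2 := by
  set A := |x| with hA
  set a := A ^ ((3 : ℝ) / 2) with hadef
  set s := |y| ^ ((2 : ℝ) / 3) with hsdef
  have hA0 : 0 ≤ A := abs_nonneg x
  have hs0 : 0 ≤ s := Real.rpow_nonneg (abs_nonneg y) _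
  have ha0 : 0 ≤ a := Real.rpow_nonneg hA0 _
  have ha2 : a ^ 2 = A ^ 3 := by
    rw [hadef, ← Real.rpow_natCast (A ^ ((3 : ℝ) / 2)) 2, ← Real.rpow_mul hA0,
      ← Real.rpow_natCast A 3]
    norm_num
  have hs2 : s ^ 2 = |y| ^ ((4 : ℝ) / 3) := by
    rw [hsdef, ← Real.rpow_natCast (|y| ^ ((2 : ℝ) / 3)) 2, ← Real.rpow_mul (abs_nonneg y)]
    norm_num
  have hs3 : s ^ 3 = y ^ 2 := by
    rw [hsdef, ← Real.rpow_natCast (|y| ^ ((2 : ℝ) / 3)) 3, ← Real.rpow_mul (abs_nonneg y)]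
    norm_num
  have hA4 : A ^ 4 = x ^ 4 := by rw [hA, ← abs_pow]; exact abs_of_nonneg (by positivity)
  -- Young: x * s^2 ≤ A^3/3 + (2/3) s^3
  have f1 : x * s ^ 2 ≤ A ^ 3 / 3 + 2 / 3 * y ^ 2 := by
    have h1 : x * s ^ 2 ≤ A * s ^ 2 :=
      mul_le_mul_of_nonneg_right (le_abs_self x) (sq_nonneg s)
    have h2 : A * s ^ 2 ≤ A ^ 3 / 3 + 2 / 3 * s ^ 3 := by
      nlinarith [mul_nonneg (sq_nonneg (A - s)) (by positivity : (0:ℝ) ≤ A + 2 * s)]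
    rw [hs3] at h2; linarith
  have f4 : (p - 1) * (a * y) ≤ (p - 1) * ((A ^ 3 + y ^ 2) / 2) := by
    have : a * y ≤ (A ^ 3 + y ^ 2) / 2 := by nlinarith [sq_nonneg (a - y)]
    exact mul_le_mul_of_nonneg_left this (by linarith)
  have f5 : -A ^ 4 + p * A ^ 3 ≤ a₁ := key A hA0
  have f6 : (0:ℝ) ≤ A ^ 3 := by positivity
  have hexp : x * (|y| ^ ((4 : ℝ) / 3) - x ^ 3) + (p - 1) / 2 * (a + y) ^ 2 =
      x * s ^ 2 - x ^ 4 + (p - 1) / 2 * a ^ 2 + (p - 1) * (a * y) + (p - 1) / 2 * y ^ 2 := by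
    rw [← hs2]; ring
  rw [hexp, ha2, ← hA4]
  nlinarith [f1, f4, f5, f6]

theorem stmt_12 (p : ℝ) (hp : 2 < p)
    (a₁ a₂ : ℝ) (ha₁ : a₁ = sSup {v : ℝ | ∃ u : ℝ, 0 ≤ u ∧ v = -u ^ 4 + p * u ^ 3})
    (ha₂ : a₂ = max (2 * a₁) p) :
    ∀ x₁ x₂ y₁ y₂ : ℝ,
      x₁ * (|y₂| ^ ((4 : ℝ) / 3) - x₁ ^ 3) + x₂ * (|y₁| ^ ((4 : ℝ) / 3) - x₂ ^ 3) +
          (p - 1) / 2 * ((|x₁| ^ ((3 : ℝ) / 2) + y₂) ^ 2 + (|x₂| ^ ((3 : ℝ) / 2) + y₁) ^ 2) ≤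
        a₂ * (1 + (x₁ ^ 2 + x₂ ^ 2) + (y₁ ^ 2 + y₂ ^ 2)) := by
  intro x₁ x₂ y₁ y₂
  have hbdd : BddAbove {v : ℝ | ∃ u : ℝ, 0 ≤ u ∧ v = -u ^ 4 + p * u ^ 3} := by
    refine ⟨p ^ 4, ?_⟩
    rintro v ⟨u, hu, rfl⟩
    nlinarith [sq_nonneg (u ^ 2 - p ^ 2), sq_nonneg (u ^ 2 - p * u), sq_nonneg (u - p),
      mul_nonneg hu hu, sq_nonneg u, sq_nonneg p, mul_nonneg (mul_nonneg hu hu) hu]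
  have key : ∀ u : ℝ, 0 ≤ u → -u ^ 4 + p * u ^ 3 ≤ a₁ := fun u hu =>
    ha₁ ▸ le_csSup hbdd ⟨u, hu, rfl⟩
  have ha₁0 : 0 ≤ a₁ := by have := key 0 le_rfl; simpa using this
  have ha₂p : p ≤ a₂ := ha₂ ▸ le_max_right _ _
  have ha₂a : 2 * a₁ ≤ a₂ := ha₂ ▸ le_max_left _ _
  have ha₂0 : 0 ≤ a₂ := le_trans (by linarith) ha₂p
  have h1 := aux12 p a₁ hp key x₁ y₂
  have h2 := aux12 p a₁ hp key x₂ y₁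
  nlinarith [sq_nonneg y₁, sq_nonneg y₂, sq_nonneg x₁, sq_nonneg x₂,
    mul_nonneg ha₂0 (sq_nonneg x₁), mul_nonneg ha₂0 (sq_nonneg x₂),
    mul_le_mul_of_nonneg_right ha₂p (sq_nonneg y₁),
    mul_le_mul_of_nonneg_right ha₂p (sq_nonneg y₂)]
end
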